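/- The colliding plane wave constraint is preserved: if smooth functions U, V, M of (θ,v) satisfy U_{θv} = U_θ U_v, V_{θv} = ½(U_θ V_v + U_v V_θ), and M_{θv} = −½(U_θ U_v − V_θ V_v), then F = U_{θθ} − ½(U_θ² + V_θ²) + U_θ M_θ satisfies F_v = U_v F; in particular, if F = 0 at v = 0 then F = 0 for all v. -/

import Mathlib

noncomputable section

/-- ∂θ on functions of (θ,v). -/
def pθ (f : ℝ × ℝ → ℝ) (x : ℝ × ℝ) : ℝ := fderiv ℝ f x (1, 0)
/-- ∂v on functions of (θ,v). -/
def pv (f : ℝ × ℝ → ℝ) (x : ℝ × ℝ) : ℝ := fderiv ℝ f x (0, 1)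

variable {f g : ℝ × ℝ → ℝ} {x : ℝ × ℝ}

lemma pv_add (hf : DifferentiableAt ℝ f x) (hg : DifferentiableAt ℝ g x) :
    pv (fun p => f p + g p) x = pv f x + pv g x := by
  unfold pv; rw [fderiv_fun_add hf hg]; simp

lemma pv_sub (hf : DifferentiableAt ℝ f x) (hg : DifferentiableAt ℝ g x) :
    pv (fun p => f p - g p) x = pv f x - pv g x := by
  unfold pv; rw [fderiv_fun_sub hf hg]; simp

lemma pv_mul (hf : DifferentiableAt ℝ f x) (hg : DifferentiableAt ℝ g x) :
    pv (fun p => f p * g p) x = pv f x * g x + f x * pv g x := by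
  unfold pv; rw [fderiv_fun_mul hf hg]; simp; ring

lemma pv_const_mul (c : ℝ) (hf : DifferentiableAt ℝ f x) :
    pv (fun p => c * f p) x = c * pv f x := by
  unfold pv; rw [fderiv_const_mul hf]; simp

lemma pv_sq (hf : DifferentiableAt ℝ f x) :
    pv (fun p => (f p)^2) x = 2 * f x * pv f x := by
  have := pv_mul hf hf
  simp only [← sq] at this
  rw [this]; ring

lemma pθ_mul (hf : DifferentiableAt ℝ f x) (hg : DifferentiableAt ℝ g x) :
    pθ (fun p => f p * g p) x = pθ f x * g x + f x * pθ g x := by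
  unfold pθ; rw [fderiv_fun_mul hf hg]; simp; ring

lemma contDiff_pθ {f : ℝ × ℝ → ℝ} (hf : ContDiff ℝ (⊤ : ℕ∞) f) : ContDiff ℝ (⊤ : ℕ∞) (pθ f) :=
  (hf.fderiv_right (by simp)).clm_apply contDiff_const
lemma contDiff_pv {f : ℝ × ℝ → ℝ} (hf : ContDiff ℝ (⊤ : ℕ∞) f) : ContDiff ℝ (⊤ : ℕ∞) (pv f) :=
  (hf.fderiv_right (by simp)).clm_apply contDiff_const

lemma pcomm {f : ℝ × ℝ → ℝ} (hf : ContDiff ℝ (⊤ : ℕ∞) f) (x : ℝ × ℝ) :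
    pv (pθ f) x = pθ (pv f) x := by
  have hdf : Differentiable ℝ (fderiv ℝ f) :=
    (hf.fderiv_right (m := (⊤ : ℕ∞)) (by simp)).differentiable (by simp)
  have hsymm : IsSymmSndFDerivAt ℝ f x :=
    (hf.contDiffAt).isSymmSndFDerivAt (by rw [minSmoothness_of_isRCLikeNormedField]; exact ENat.natCast_le_of_coe_top_le_withTop le_rfl 2)
  have h1 : pv (pθ f) x = fderiv ℝ (fderiv ℝ f) x (0,1) (1,0) := by
    unfold pv pθ
    rw [fderiv_clm_apply (hdf x) (differentiableAt_const _)]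
    simp
  have h2 : pθ (pv f) x = fderiv ℝ (fderiv ℝ f) x (1,0) (0,1) := by
    unfold pv pθ
    rw [fderiv_clm_apply (hdf x) (differentiableAt_const _)]
    simp
  rw [h1, h2, hsymm.eq]


/-- The colliding plane wave constraint is preserved: F_v = U_v F, and if F = 0
at v = 0 then F = 0 for all v. -/
theorem cpw_constraint_preserved (U V M : ℝ × ℝ → ℝ)
    (hU : ContDiff ℝ (⊤ : ℕ∞) U) (hV : ContDiff ℝ (⊤ : ℕ∞) V) (hM : ContDiff ℝ (⊤ : ℕ∞) M)
    (heqU : ∀ x : ℝ × ℝ, pv (pθ U) x = pθ U x * pv U x)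
    (heqV : ∀ x : ℝ × ℝ, pv (pθ V) x = (1/2) * (pθ U x * pv V x + pv U x * pθ V x))
    (heqM : ∀ x : ℝ × ℝ, pv (pθ M) x = -(1/2) * (pθ U x * pv U x - pθ V x * pv V x)) :
    (∀ x : ℝ × ℝ,
      pv (fun p => pθ (pθ U) p - (1/2) * ((pθ U p)^2 + (pθ V p)^2) + pθ U p * pθ M p) x
        = pv U x * (pθ (pθ U) x - (1/2) * ((pθ U x)^2 + (pθ V x)^2) + pθ U x * pθ M x))
    ∧ ((∀ θ : ℝ,
          pθ (pθ U) (θ, 0) - (1/2) * ((pθ U (θ, 0))^2 + (pθ V (θ, 0))^2)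
            + pθ U (θ, 0) * pθ M (θ, 0) = 0) →
        ∀ x : ℝ × ℝ,
          pθ (pθ U) x - (1/2) * ((pθ U x)^2 + (pθ V x)^2) + pθ U x * pθ M x = 0) := by
  -- smoothness facts
  have hθU := contDiff_pθ hU
  have hθθU := contDiff_pθ hθU
  have hvU := contDiff_pv hU
  have hθV := contDiff_pθ hV
  have hvV := contDiff_pv hV
  have hθM := contDiff_pθ hM
  have dθU : Differentiable ℝ (pθ U) := hθU.differentiable (by simp)
  have dθθU : Differentiable ℝ (pθ (pθ U)) := hθθU.differentiable (by simp)
  have dvU : Differentiable ℝ (pv U) := hvU.differentiable (by simp)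
  have dθV : Differentiable ℝ (pθ V) := hθV.differentiable (by simp)
  have dθM : Differentiable ℝ (pθ M) := hθM.differentiable (by simp)
  have part1 : ∀ x : ℝ × ℝ,
      pv (fun p => pθ (pθ U) p - (1/2) * ((pθ U p)^2 + (pθ V p)^2) + pθ U p * pθ M p) x
        = pv U x * (pθ (pθ U) x - (1/2) * ((pθ U x)^2 + (pθ V x)^2) + pθ U x * pθ M x) := by
    intro x
    -- diff at facts
    have d1 : DifferentiableAt ℝ (fun p => (pθ U p)^2 + (pθ V p)^2) x :=
      (((dθU x).pow 2).add ((dθV x).pow 2))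
    have d2 : DifferentiableAt ℝ (fun p => pθ (pθ U) p - (1/2) * ((pθ U p)^2 + (pθ V p)^2)) x :=
      (dθθU x).sub (d1.const_mul _)
    have d3 : DifferentiableAt ℝ (fun p => pθ U p * pθ M p) x := (dθU x).mul (dθM x)
    rw [pv_add d2 d3, pv_sub (dθθU x) (d1.const_mul _), pv_const_mul _ d1,
        pv_add (f := fun p => pθ U p ^ 2) (g := fun p => pθ V p ^ 2) ((dθU x).pow 2) ((dθV x).pow 2), pv_sq (dθU x), pv_sq (dθV x),
        pv_mul (dθU x) (dθM x)]
    -- key: third-order mixed derivative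
    have key : pv (pθ (pθ U)) x
        = pθ (pθ U) x * pv U x + pθ U x * (pθ U x * pv U x) := by
      calc pv (pθ (pθ U)) x = pθ (pv (pθ U)) x := pcomm hθU x
        _ = pθ (fun p => pθ U p * pv U p) x := by
              congr 1; funext p; exact heqU p
        _ = pθ (pθ U) x * pv U x + pθ U x * pθ (pv U) x :=
              pθ_mul (dθU x) (dvU x)
        _ = pθ (pθ U) x * pv U x + pθ U x * (pθ U x * pv U x) := by
              rw [← pcomm hU x, heqU x]
    rw [key, heqU x, heqV x, heqM x]
    ring
  refine ⟨part1, fun h0 x => ?_⟩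
  obtain ⟨θ₀, v₀⟩ := x
  set F : ℝ × ℝ → ℝ := fun p =>
    pθ (pθ U) p - (1/2) * ((pθ U p)^2 + (pθ V p)^2) + pθ U p * pθ M p with hF
  have dF : Differentiable ℝ F := by
    exact ((dθθU.sub ((((dθU.pow 2)).add ((dθV.pow 2))).const_mul _)).add (dθU.mul dθM))
  -- vertical line derivatives
  have hline : ∀ v : ℝ, HasDerivAt (fun w : ℝ => ((θ₀, w) : ℝ × ℝ)) (0, 1) v := by
    intro v
    exact (hasDerivAt_const v θ₀).prodMk (hasDerivAt_id v)
  have hgF : ∀ v : ℝ, HasDerivAt (fun w => F (θ₀, w)) (pv F (θ₀, v)) v := by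
    intro v
    exact (dF (θ₀, v)).hasFDerivAt.comp_hasDerivAt v (hline v)
  have hgU : ∀ v : ℝ, HasDerivAt (fun w => U (θ₀, w)) (pv U (θ₀, v)) v := by
    intro v
    exact ((hU.differentiable (by simp)) (θ₀, v)).hasFDerivAt.comp_hasDerivAt v (hline v)
  set h : ℝ → ℝ := fun v => F (θ₀, v) * Real.exp (-(U (θ₀, v))) with hh
  have hderiv : ∀ v : ℝ, HasDerivAt h 0 v := by
    intro v
    have e1 : HasDerivAt (fun w => Real.exp (-(U (θ₀, w))))
        (Real.exp (-(U (θ₀, v))) * (-(pv U (θ₀, v)))) v :=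
      ((hgU v).neg).exp
    have := (hgF v).fun_mul e1
    have hfv := part1 (θ₀, v)
    rw [hF] at hfv
    refine this.congr_deriv ?_
    rw [hfv]
    ring
  have hconst : ∀ v : ℝ, h v = h 0 := by
    intro v
    exact is_const_of_deriv_eq_zero (fun w => (hderiv w).differentiableAt)
      (fun w => (hderiv w).deriv) v 0
  have h00 : h 0 = 0 := by
    simp only [hh, hF]
    rw [h0 θ₀]
    ring
  have := hconst v₀
  rw [h00, hh] at this
  have hFzero : F (θ₀, v₀) = 0 := by
    rcases mul_eq_zero.1 this with h' | h'
    · exact h'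
    · exact absurd h' (Real.exp_ne_zero _)
  simpa [hF] using hFzero
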